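/- Let U = u₁ ⊗ ⋯ ⊗ u_n be a tensor product of independent single-qubit Haar-random (or 2-design) gates, B an operator on (ℂ²)^{⊗n}, and O = Σ_P a_P P an observable expanded in the real Pauli basis. Then E_U[Tr(O U B U†)²] = Σ_P a_P² · E_U[Tr(P U B U†)²]; i.e. cross terms between distinct Pauli strings vanish. -/

import Mathlib

open Matrix MeasureTheory

instance matrixMeasurableSpace {m n : Type*} [MeasurableSpace ℂ] :
    MeasurableSpace (Matrix m n ℂ) :=
  MeasurableSpace.pi

/-- The single-qubit Pauli matrices `I, X, Y, Z`. -/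
noncomputable def pauli : Fin 4 → Matrix (Fin 2) (Fin 2) ℂ :=
  ![1, !![0, 1; 1, 0], !![0, -Complex.I; Complex.I, 0], !![1, 0; 0, -1]]

/-- The `n`-qubit Pauli string indexed by `s : Fin n → Fin 4`. -/
noncomputable def pauliString {n : ℕ} (s : Fin n → Fin 4) :
    Matrix (Fin n → Fin 2) (Fin n → Fin 2) ℂ :=
  Matrix.of fun x y => ∏ i, pauli (s i) (x i) (y i)

/-- The tensor product `u₁ ⊗ ⋯ ⊗ u_n` of single-qubit operators. -/
noncomputable def tensorLayer {n : ℕ} (u : Fin n → Matrix (Fin 2) (Fin 2) ℂ) :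
    Matrix (Fin n → Fin 2) (Fin n → Fin 2) ℂ :=
  Matrix.of fun x y => ∏ i, u i (x i) (y i)

namespace PauliCross

lemma tensorLayer_mul {n : ℕ} (A C : Fin n → Matrix (Fin 2) (Fin 2) ℂ) :
    tensorLayer (fun i => A i * C i) = tensorLayer A * tensorLayer C := by
  ext x y
  simp only [tensorLayer, Matrix.of_apply, Matrix.mul_apply]
  rw [Finset.prod_univ_sum]
  rw [← Fintype.piFinset_univ]
  exact Finset.sum_congr rfl fun z _ => Finset.prod_mul_distrib

lemma pauliString_eq {n : ℕ} (s : Fin n → Fin 4) :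
    pauliString s = tensorLayer (fun i => pauli (s i)) := rfl

noncomputable def eps (p q : Fin 4) : ℂ := if p = 0 ∨ q = 0 ∨ p = q then 1 else -1

lemma pauli_star (p : Fin 4) : star (pauli p) = pauli p := by
  fin_cases p <;>
    · ext i j
      fin_cases i <;> fin_cases j <;>
        simp [pauli, Matrix.star_apply, Matrix.one_apply, Complex.ext_iff]

lemma pauli_conj (p q : Fin 4) : pauli p * pauli q * pauli p = eps p q • pauli q := by
  fin_cases p <;> fin_cases q <;>
    · ext i j
      fin_cases i <;> fin_cases j <;>
        simp [pauli, eps, Matrix.mul_apply, Fin.sum_univ_two, Matrix.one_apply,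
          Complex.ext_iff]

lemma pauli_mem (p : Fin 4) : pauli p ∈ Matrix.unitaryGroup (Fin 2) ℂ := by
  constructor <;>
    · rw [pauli_star]
      fin_cases p <;>
        · ext i j
          fin_cases i <;> fin_cases j <;>
            simp [pauli, Matrix.mul_apply, Fin.sum_univ_two, Matrix.one_apply, Complex.ext_iff]

lemma eps_orthogonal {q r : Fin 4} (h : q ≠ r) : ∑ p : Fin 4, eps p q * eps p r = 0 := by
  fin_cases q <;> fin_cases r <;> simp_all [eps, Fin.sum_univ_four]

lemma tensorLayer_smul_site {n : ℕ} (j : Fin n) (c : ℂ) (v : Fin n → Matrix (Fin 2) (Fin 2) ℂ) :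
    tensorLayer (fun i => (if i = j then c else 1) • v i) = c • tensorLayer v := by
  ext x y
  simp only [tensorLayer, Matrix.of_apply, Matrix.smul_apply, smul_eq_mul,
    Finset.prod_mul_distrib]
  rw [Finset.prod_ite_eq' Finset.univ j (fun _ => c)]
  simp

lemma layer_conj {n : ℕ} (j : Fin n) (p : Fin 4) (s : Fin n → Fin 4) :
    tensorLayer (fun i => if i = j then pauli p else 1) * pauliString s *
      tensorLayer (fun i => if i = j then pauli p else 1) =
    eps p (s j) • pauliString s := by
  rw [pauliString_eq, ← tensorLayer_mul, ← tensorLayer_mul]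
  have h : (fun i => (if i = j then pauli p else 1) * pauli (s i) *
      (if i = j then pauli p else 1)) =
      fun i => (if i = j then eps p (s j) else 1) • pauli (s i) := by
    funext i
    by_cases h : i = j
    · subst h; simp [pauli_conj]
    · simp [h]
  rw [h, tensorLayer_smul_site, ← pauliString_eq]

lemma trace_expand {I : Type*} [Fintype I] [DecidableEq I] (M U B V : Matrix I I ℂ) :
    Matrix.trace (M * U * B * V) =
      ∑ x, ∑ w, ∑ z, ∑ y, M x y * U y z * B z w * V w x := by
  simp only [Matrix.trace, Matrix.diag, Matrix.mul_apply, Finset.sum_mul]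

lemma entry_abs_le (u : Matrix.unitaryGroup (Fin 2) ℂ) (a b : Fin 2) :
    ‖(u : Matrix (Fin 2) (Fin 2) ℂ) a b‖ ≤ 1 := by
  have h : star (u : Matrix (Fin 2) (Fin 2) ℂ) * u = 1 := Matrix.UnitaryGroup.star_mul_self u
  have h1 := congrFun (congrFun (congrArg (fun M : Matrix (Fin 2) (Fin 2) ℂ => M) h) b) b
  simp only [Matrix.mul_apply, Matrix.one_apply_eq, Matrix.star_apply] at h1
  have h2 : ∑ c, (Complex.normSq ((u : Matrix (Fin 2) (Fin 2) ℂ) c b) : ℂ) = 1 := by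
    rw [← h1]
    exact Finset.sum_congr rfl fun c _ => Complex.normSq_eq_conj_mul_self
  have h3 : ∑ c, Complex.normSq ((u : Matrix (Fin 2) (Fin 2) ℂ) c b) = 1 := by
    exact_mod_cast h2
  have h4 : Complex.normSq ((u : Matrix (Fin 2) (Fin 2) ℂ) a b) ≤ 1 := by
    rw [← h3]
    exact Finset.single_le_sum
      (f := fun c => Complex.normSq ((u : Matrix (Fin 2) (Fin 2) ℂ) c b))
      (fun c _ => Complex.normSq_nonneg _) (Finset.mem_univ a)
  have h5 := Complex.sq_norm ((u : Matrix (Fin 2) (Fin 2) ℂ) a b)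
  nlinarith [norm_nonneg ((u : Matrix (Fin 2) (Fin 2) ℂ) a b)]

lemma pauli_abs_le (p : Fin 4) (a b : Fin 2) : ‖pauli p a b‖ ≤ 1 := by
  fin_cases p <;> fin_cases a <;> fin_cases b <;>
    norm_num [pauli, Matrix.one_apply]

lemma measurable_matrix_entry {i j : Fin 2} :
    Measurable fun M : Matrix (Fin 2) (Fin 2) ℂ => M i j :=
  (measurable_pi_apply j).comp (measurable_pi_apply i)

lemma measurable_entry {n : ℕ} (i : Fin n) (a b : Fin 2) :
    Measurable fun u : Fin n → Matrix.unitaryGroup (Fin 2) ℂ =>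
      ((u i : Matrix (Fin 2) (Fin 2) ℂ)) a b :=
  measurable_matrix_entry.comp (measurable_subtype_coe.comp (measurable_pi_apply i))

variable {n : ℕ} (B : Matrix (Fin n → Fin 2) (Fin n → Fin 2) ℂ)

/-- The basic observable trace function. -/
noncomputable def Fobs (s : Fin n → Fin 4) (u : Fin n → Matrix.unitaryGroup (Fin 2) ℂ) : ℂ :=
  Matrix.trace (pauliString s *
    tensorLayer (fun i => (u i : Matrix (Fin 2) (Fin 2) ℂ)) * B *
    tensorLayer (fun i => star ((u i : Matrix (Fin 2) (Fin 2) ℂ))))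

lemma measurable_Fobs (s : Fin n → Fin 4) : Measurable (Fobs B s) := by
  unfold Fobs
  simp only [trace_expand, tensorLayer, Matrix.of_apply, Matrix.star_apply]
  apply Finset.measurable_sum; intro x _
  apply Finset.measurable_sum; intro w _
  apply Finset.measurable_sum; intro z _
  apply Finset.measurable_sum; intro y _
  refine ((measurable_const.mul ?_).mul measurable_const).mul ?_
  · exact Finset.measurable_prod _ fun i _ => measurable_entry i _ _
  · exact Finset.measurable_prod _ fun i _ => continuous_star.measurable.comp (measurable_entry i _ _)

noncomputable def Cb : ℝ :=
  ∑ _x : Fin n → Fin 2, ∑ w : Fin n → Fin 2, ∑ z : Fin n → Fin 2, ∑ _y : Fin n → Fin 2,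
    ‖B z w‖

lemma Cb_nonneg : (0:ℝ) ≤ Cb B := by
  unfold Cb
  refine Finset.sum_nonneg fun x _ => Finset.sum_nonneg fun w _ =>
    Finset.sum_nonneg fun z _ => Finset.sum_nonneg fun y _ => norm_nonneg _

lemma abs_Fobs_le (s : Fin n → Fin 4) (u : Fin n → Matrix.unitaryGroup (Fin 2) ℂ) :
    ‖Fobs B s u‖ ≤ Cb B := by
  unfold Fobs Cb
  rw [trace_expand]
  refine (norm_sum_le _ _).trans (Finset.sum_le_sum fun x _ => ?_)
  refine (norm_sum_le _ _).trans (Finset.sum_le_sum fun w _ => ?_)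
  refine (norm_sum_le _ _).trans (Finset.sum_le_sum fun z _ => ?_)
  refine (norm_sum_le _ _).trans (Finset.sum_le_sum fun y _ => ?_)
  rw [norm_mul, norm_mul, norm_mul]
  have hP : ‖pauliString s x y‖ ≤ 1 := by
    simp only [pauliString, Matrix.of_apply, norm_prod]
    exact Finset.prod_le_one (fun i _ => norm_nonneg _)
      (fun i _ => pauli_abs_le _ _ _)
  have hU : ‖tensorLayer (fun i => ((u i : Matrix (Fin 2) (Fin 2) ℂ))) y z‖ ≤ 1 := by
    simp only [tensorLayer, Matrix.of_apply, norm_prod]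
    exact Finset.prod_le_one (fun i _ => norm_nonneg _)
      (fun i _ => entry_abs_le _ _ _)
  have hV : ‖tensorLayer (fun i => star ((u i : Matrix (Fin 2) (Fin 2) ℂ))) w x‖
      ≤ 1 := by
    simp only [tensorLayer, Matrix.of_apply, norm_prod, Matrix.star_apply]
    refine Finset.prod_le_one (fun i _ => norm_nonneg _) (fun i _ => ?_)
    rw [Complex.star_def, Complex.norm_conj]
    exact entry_abs_le _ _ _
  calc ‖pauliString s x y‖ *
        ‖tensorLayer (fun i => ((u i : Matrix (Fin 2) (Fin 2) ℂ))) y z‖ *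
        ‖B z w‖ *
        ‖tensorLayer (fun i => star ((u i : Matrix (Fin 2) (Fin 2) ℂ))) w x‖
      ≤ 1 * 1 * ‖B z w‖ * 1 := by
        gcongr
    _ = ‖B z w‖ := by ring

lemma integrable_Fobs_mul (μ : Measure (Fin n → Matrix.unitaryGroup (Fin 2) ℂ))
    [IsProbabilityMeasure μ] (s t : Fin n → Fin 4) :
    Integrable (fun u => Fobs B s u * Fobs B t u) μ := by
  refine Integrable.mono' (integrable_const (Cb B * Cb B))
    ((measurable_Fobs B s).mul (measurable_Fobs B t)).aestronglyMeasurable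
    (ae_of_all _ fun u => ?_)
  rw [norm_mul]
  have h1 := abs_Fobs_le B s u
  have h2 := abs_Fobs_le B t u
  exact mul_le_mul h1 h2 (norm_nonneg _) (Cb_nonneg B)

lemma Fobs_update (s : Fin n → Fin 4) (j : Fin n) (p : Fin 4)
    (u : Fin n → Matrix.unitaryGroup (Fin 2) ℂ) :
    Fobs B s (fun i => if i = j then
        (⟨pauli p, pauli_mem p⟩ : Matrix.unitaryGroup (Fin 2) ℂ) * u i else u i) =
      eps p (s j) * Fobs B s u := by
  have hcoe : (fun i => (((if i = j then
        (⟨pauli p, pauli_mem p⟩ : Matrix.unitaryGroup (Fin 2) ℂ) * u i else u i) :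
        Matrix.unitaryGroup (Fin 2) ℂ) : Matrix (Fin 2) (Fin 2) ℂ)) =
      fun i => (if i = j then pauli p else 1) * ((u i : Matrix (Fin 2) (Fin 2) ℂ)) := by
    funext i
    by_cases h : i = j <;> simp [h]
  have hstar : (fun i => star (((if i = j then
        (⟨pauli p, pauli_mem p⟩ : Matrix.unitaryGroup (Fin 2) ℂ) * u i else u i) :
        Matrix.unitaryGroup (Fin 2) ℂ) : Matrix (Fin 2) (Fin 2) ℂ)) =
      fun i => star ((u i : Matrix (Fin 2) (Fin 2) ℂ)) * (if i = j then pauli p else 1) := by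
    funext i
    by_cases h : i = j <;> simp [h, Matrix.star_mul, pauli_star]
  have e1 : tensorLayer (fun i => (if i = j then pauli p else 1) *
        ((u i : Matrix (Fin 2) (Fin 2) ℂ))) =
      tensorLayer (fun i => if i = j then pauli p else 1) *
        tensorLayer (fun i => ((u i : Matrix (Fin 2) (Fin 2) ℂ))) := tensorLayer_mul _ _
  have e2 : tensorLayer (fun i => star ((u i : Matrix (Fin 2) (Fin 2) ℂ)) *
        (if i = j then pauli p else 1)) =
      tensorLayer (fun i => star ((u i : Matrix (Fin 2) (Fin 2) ℂ))) *
        tensorLayer (fun i => if i = j then pauli p else 1) := tensorLayer_mul _ _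
  unfold Fobs
  rw [hcoe, hstar, e1, e2]
  set L : Matrix (Fin n → Fin 2) (Fin n → Fin 2) ℂ :=
    tensorLayer (fun i => if i = j then pauli p else 1) with hL
  set Uc : Matrix (Fin n → Fin 2) (Fin n → Fin 2) ℂ :=
    tensorLayer (fun i => ((u i : Matrix (Fin 2) (Fin 2) ℂ))) with hU
  set Vc : Matrix (Fin n → Fin 2) (Fin n → Fin 2) ℂ :=
    tensorLayer (fun i => star ((u i : Matrix (Fin 2) (Fin 2) ℂ))) with hV
  have lc : L * pauliString s * L = eps p (s j) • pauliString s := by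
    rw [hL]; exact layer_conj j p s
  calc Matrix.trace (pauliString s * (L * Uc) * B * (Vc * L))
      = Matrix.trace ((pauliString s * (L * Uc) * B * Vc) * L) := by rw [mul_assoc _ Vc L, ← mul_assoc]
    _ = Matrix.trace (L * (pauliString s * (L * Uc) * B * Vc)) := Matrix.trace_mul_comm _ _
    _ = Matrix.trace (L * pauliString s * L * Uc * B * Vc) := by
        rw [show L * (pauliString s * (L * Uc) * B * Vc) =
          L * pauliString s * L * Uc * B * Vc by simp only [mul_assoc]]
    _ = eps p (s j) * Matrix.trace (pauliString s * Uc * B * Vc) := by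
        rw [lc, smul_mul_assoc, smul_mul_assoc, smul_mul_assoc, Matrix.trace_smul,
          smul_eq_mul]

lemma cross_zero (ν : Fin n → Measure (Matrix.unitaryGroup (Fin 2) ℂ))
    [∀ i, IsProbabilityMeasure (ν i)]
    (hleft : ∀ i (V : Matrix.unitaryGroup (Fin 2) ℂ),
      MeasurePreserving (fun u => V * u) (ν i) (ν i))
    {s t : Fin n → Fin 4} (h : s ≠ t) :
    ∫ u, Fobs B s u * Fobs B t u ∂(Measure.pi ν) = 0 := by
  obtain ⟨j, hj⟩ := Function.ne_iff.mp h
  have hmeas : Measurable fun u => Fobs B s u * Fobs B t u :=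
    (measurable_Fobs B s).mul (measurable_Fobs B t)
  have key : ∀ p : Fin 4, ∫ u, Fobs B s u * Fobs B t u ∂(Measure.pi ν) =
      eps p (s j) * eps p (t j) * ∫ u, Fobs B s u * Fobs B t u ∂(Measure.pi ν) := by
    intro p
    have hmp : MeasurePreserving
        (fun (u : Fin n → Matrix.unitaryGroup (Fin 2) ℂ) i => if i = j then
          (⟨pauli p, pauli_mem p⟩ : Matrix.unitaryGroup (Fin 2) ℂ) * u i else u i)
        (Measure.pi ν) (Measure.pi ν) := by
      refine measurePreserving_pi ν ν (f := fun i x => if i = j then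
        (⟨pauli p, pauli_mem p⟩ : Matrix.unitaryGroup (Fin 2) ℂ) * x else x) (fun i => ?_)
      by_cases hij : i = j
      · subst hij
        simpa using hleft i (⟨pauli p, pauli_mem p⟩ : Matrix.unitaryGroup (Fin 2) ℂ)
      · simp only [hij, ↓reduceIte]
        exact MeasurePreserving.id (ν i)
    have step1 : ∫ u, Fobs B s u * Fobs B t u ∂(Measure.pi ν) =
        ∫ u, Fobs B s (fun i => if i = j then
            (⟨pauli p, pauli_mem p⟩ : Matrix.unitaryGroup (Fin 2) ℂ) * u i else u i) *
          Fobs B t (fun i => if i = j then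
            (⟨pauli p, pauli_mem p⟩ : Matrix.unitaryGroup (Fin 2) ℂ) * u i else u i)
          ∂(Measure.pi ν) := by
      conv_lhs => rw [← hmp.map_eq]
      exact integral_map hmp.measurable.aemeasurable
        (hmp.map_eq.symm ▸ hmeas.aestronglyMeasurable)
    conv_lhs => rw [step1]
    have step2 : ∫ u, (Fobs B s fun i => if i = j then
          (⟨pauli p, pauli_mem p⟩ : Matrix.unitaryGroup (Fin 2) ℂ) * u i else u i) *
        (Fobs B t fun i => if i = j then
          (⟨pauli p, pauli_mem p⟩ : Matrix.unitaryGroup (Fin 2) ℂ) * u i else u i)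
        ∂(Measure.pi ν) =
        ∫ u, (eps p (s j) * eps p (t j)) • (Fobs B s u * Fobs B t u) ∂(Measure.pi ν) := by
      refine integral_congr_ae (ae_of_all _ fun u => ?_)
      beta_reduce
      rw [Fobs_update, Fobs_update]
      simp only [smul_eq_mul]
      ring
    conv_lhs => rw [step2]
    rw [integral_smul, smul_eq_mul]
  have hsum : (4 : ℂ) * ∫ u, Fobs B s u * Fobs B t u ∂(Measure.pi ν) =
      (∑ p : Fin 4, eps p (s j) * eps p (t j)) *
        ∫ u, Fobs B s u * Fobs B t u ∂(Measure.pi ν) := by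
    rw [Finset.sum_mul]
    calc (4 : ℂ) * ∫ u, Fobs B s u * Fobs B t u ∂(Measure.pi ν)
        = ∑ _p : Fin 4, ∫ u, Fobs B s u * Fobs B t u ∂(Measure.pi ν) := by
          simp [Finset.sum_const, Fintype.card_fin]
      _ = ∑ p : Fin 4, eps p (s j) * eps p (t j) *
            ∫ u, Fobs B s u * Fobs B t u ∂(Measure.pi ν) :=
          Finset.sum_congr rfl fun p _ => key p
  rw [eps_orthogonal hj, zero_mul] at hsum
  have h4 : (4 : ℂ) ≠ 0 := by norm_num
  exact (mul_eq_zero.mp hsum).resolve_left h4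

end PauliCross

/-- for a layer `U = u₁⊗⋯⊗u_n` of independent single-qubit Haar-random
(hence 2-design) gates and `O = Σ_P a_P P` with real Pauli coefficients,
`E_U[Tr(O U B U†)²] = Σ_P a_P² E_U[Tr(P U B U†)²]`: cross terms vanish. -/
theorem pauli_cross_terms_vanish (n : ℕ)
    (ν : Fin n → Measure (Matrix.unitaryGroup (Fin 2) ℂ))
    [∀ i, IsProbabilityMeasure (ν i)]
    (hleft : ∀ i (V : Matrix.unitaryGroup (Fin 2) ℂ),
      MeasurePreserving (fun u => V * u) (ν i) (ν i))
    (hright : ∀ i (V : Matrix.unitaryGroup (Fin 2) ℂ),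
      MeasurePreserving (fun u => u * V) (ν i) (ν i))
    (B : Matrix (Fin n → Fin 2) (Fin n → Fin 2) ℂ)
    (a : (Fin n → Fin 4) → ℝ) :
    (∫ u : Fin n → Matrix.unitaryGroup (Fin 2) ℂ,
        (Matrix.trace ((∑ s : Fin n → Fin 4, (a s : ℂ) • pauliString s) *
          tensorLayer (fun i => (u i : Matrix (Fin 2) (Fin 2) ℂ)) * B *
          tensorLayer (fun i => star ((u i : Matrix (Fin 2) (Fin 2) ℂ))))) ^ 2
        ∂(Measure.pi ν)) =
      ∑ s : Fin n → Fin 4, (a s : ℂ) ^ 2 *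
        ∫ u : Fin n → Matrix.unitaryGroup (Fin 2) ℂ,
          (Matrix.trace (pauliString s *
            tensorLayer (fun i => (u i : Matrix (Fin 2) (Fin 2) ℂ)) * B *
            tensorLayer (fun i => star ((u i : Matrix (Fin 2) (Fin 2) ℂ))))) ^ 2
          ∂(Measure.pi ν) := by
  classical
  have hpt : ∀ u : Fin n → Matrix.unitaryGroup (Fin 2) ℂ,
      (Matrix.trace ((∑ s : Fin n → Fin 4, (a s : ℂ) • pauliString s) *
        tensorLayer (fun i => (u i : Matrix (Fin 2) (Fin 2) ℂ)) * B *
        tensorLayer (fun i => star ((u i : Matrix (Fin 2) (Fin 2) ℂ))))) ^ 2 =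
      ∑ s : Fin n → Fin 4, ∑ t : Fin n → Fin 4,
        ((a s : ℂ) * (a t : ℂ)) * (PauliCross.Fobs B s u * PauliCross.Fobs B t u) := by
    intro u
    have hexp : Matrix.trace ((∑ s : Fin n → Fin 4, (a s : ℂ) • pauliString s) *
        tensorLayer (fun i => (u i : Matrix (Fin 2) (Fin 2) ℂ)) * B *
        tensorLayer (fun i => star ((u i : Matrix (Fin 2) (Fin 2) ℂ)))) =
        ∑ s : Fin n → Fin 4, (a s : ℂ) * PauliCross.Fobs B s u := by
      simp only [Finset.sum_mul, smul_mul_assoc, Matrix.trace_sum, Matrix.trace_smul,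
        smul_eq_mul, PauliCross.Fobs]
    rw [hexp, pow_two, Finset.sum_mul_sum]
    exact Finset.sum_congr rfl fun s _ => Finset.sum_congr rfl fun t _ => by ring
  have hint : ∀ s t : Fin n → Fin 4,
      Integrable (fun u => ((a s : ℂ) * (a t : ℂ)) *
        (PauliCross.Fobs B s u * PauliCross.Fobs B t u)) (Measure.pi ν) :=
    fun s t => (PauliCross.integrable_Fobs_mul B (Measure.pi ν) s t).const_mul _
  simp_rw [hpt]
  rw [integral_finset_sum _ (fun s _ => integrable_finset_sum _ (fun t _ => hint s t))]
  refine Finset.sum_congr rfl fun s _ => ?_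
  rw [integral_finset_sum _ (fun t _ => hint s t)]
  rw [Finset.sum_eq_single s]
  · rw [integral_const_mul]
    have h1 : (fun u => PauliCross.Fobs B s u * PauliCross.Fobs B s u) =
        fun u => (PauliCross.Fobs B s u) ^ 2 := funext fun u => (pow_two _).symm
    rw [h1]
    have h2 : (a s : ℂ) * (a s : ℂ) = (a s : ℂ) ^ 2 := (pow_two _).symm
    rw [h2]
    rfl
  · intro t _ hts
    rw [integral_const_mul, PauliCross.cross_zero B ν hleft (Ne.symm hts), mul_zero]
  · intro hs
    exact absurd (Finset.mem_univ s) hs
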